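/- For every integer d > 1 and every ε > 0, let k = max{1, min{d, ⌊ε/2.5⌋}} and let ε* = ln( (−5 + 2·(6353 − 405√241)^{1/3} + 2·(6353 + 405√241)^{1/3}) / 27 ). Define MaxVar_D = ((e^ε+1)/(e^ε−1))²·C_d², MaxVar_P = d·(e^{ε/(2k)}+3)/(3k·(e^{ε/(2k)}−1)²) + d·e^{ε/(2k)}/(k·(e^{ε/(2k)}−1)) − 1, and MaxVar_H = (d/k)·[ (e^{ε/(2k)}+3)/(3e^{ε/(2k)}(e^{ε/(2k)}−1)) + (e^{ε/k}+1)²/(e^{ε/(2k)}(e^{ε/k}−1)²) ] + d/k − 1 if ε/k > ε*, and MaxVar_H = (d/k)·((e^{ε/k}+1)/(e^{ε/k}−1))² + d/k − 1 if ε/k ≤ ε*. Then MaxVar_H < MaxVar_P < MaxVar_D. -/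
import Mathlib


open Real

/-- the constant `C_d` from Duchi et al.'s multidimensional mechanism. -/
noncomputable def Cd (d : ℕ) : ℝ :=
  if d % 2 = 1 then (2 : ℝ) ^ (d - 1) / (Nat.choose (d - 1) ((d - 1) / 2))
  else ((2 : ℝ) ^ (d - 1) + (1 / 2 : ℝ) * Nat.choose d (d / 2)) / (Nat.choose (d - 1) (d / 2))

/-- `ε* = ln((−5 + 2·(6353 − 405√241)^{1/3} + 2·(6353 + 405√241)^{1/3}) / 27)`. -/
noncomputable def epsStar : ℝ :=
  Real.log ((-5 + 2 * (6353 - 405 * Real.sqrt 241) ^ ((1 : ℝ) / 3) +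
      2 * (6353 + 405 * Real.sqrt 241) ^ ((1 : ℝ) / 3)) / 27)

lemma f_bound (m : ℕ) (hm : 1 ≤ m) :
    (4/3 : ℝ) * (2*m+1) ≤ ((4:ℝ)^m / (Nat.centralBinom m))^2 := by
  induction m, hm using Nat.le_induction with
  | base => norm_num [Nat.centralBinom]
  | succ m hm ih =>
    have hB : (0:ℝ) < (Nat.centralBinom m : ℝ) := by exact_mod_cast Nat.centralBinom_pos m
    have hB' : (0:ℝ) < (Nat.centralBinom (m+1) : ℝ) := by exact_mod_cast Nat.centralBinom_pos (m+1)
    have hrec : ((m:ℝ)+1) * (Nat.centralBinom (m+1) : ℝ)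
        = 2*(2*(m:ℝ)+1) * (Nat.centralBinom m : ℝ) := by
      exact_mod_cast congrArg (Nat.cast (R := ℝ)) (Nat.succ_mul_centralBinom_succ m)
    set B : ℝ := (Nat.centralBinom m : ℝ)
    set B' : ℝ := (Nat.centralBinom (m+1) : ℝ)
    set F : ℝ := (4:ℝ)^m / B with hF
    set F' : ℝ := (4:ℝ)^(m+1) / B' with hF'
    have hrel : F' * (2*(m:ℝ)+1) = F * (2*((m:ℝ)+1)) := by
      rw [hF, hF']
      field_simp
      linear_combination (-2*(4:ℝ)^m) * hrec
    have h1 : F'^2 * (2*(m:ℝ)+1)^2 = F^2 * (2*((m:ℝ)+1))^2 := by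
      linear_combination (F'*(2*(m:ℝ)+1) + F*(2*((m:ℝ)+1))) * hrel
    have hM : (1:ℝ) ≤ (m:ℝ) := by exact_mod_cast hm
    have goal' : (4/3 : ℝ) * (2*((m:ℝ)+1)+1) ≤ F'^2 := by
      nlinarith [ih, h1, sq_nonneg F, sq_nonneg F']
    calc (4/3 : ℝ) * (2*(↑(m+1))+1) = (4/3 : ℝ) * (2*((m:ℝ)+1)+1) := by push_cast; ring
      _ ≤ F'^2 := goal'

lemma Cd_odd (m : ℕ) : Cd (2*m+1) = (4:ℝ)^m / (Nat.centralBinom m) := by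
  have h1 : (2*m+1) % 2 = 1 := by omega
  have h2 : 2*m+1-1 = 2*m := by omega
  have h3 : (2*m)/2 = m := by omega
  rw [Cd, if_pos h1, h2, h3, Nat.centralBinom_eq_two_mul_choose]
  norm_num [pow_mul]

lemma Cd_even (m : ℕ) (hm : 1 ≤ m) :
    Cd (2*m) = (4:ℝ)^m / (Nat.centralBinom m) + 1 := by
  obtain ⟨j, rfl⟩ : ∃ j, m = j+1 := ⟨m-1, by omega⟩
  have e1 : 2*(j+1)-1 = 2*j+1 := by omega
  have e2 : (2*(j+1))/2 = j+1 := by omega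
  have hch : 2 * Nat.choose (2*j+1) (j+1) = Nat.centralBinom (j+1) := by
    have h6 : Nat.choose (2*j+1) j = Nat.choose (2*j+1) (j+1) := by
      have := Nat.choose_symm (show j+1 ≤ 2*j+1 by omega)
      simpa [show 2*j+1-(j+1) = j from by omega] using this
    have h7 : Nat.centralBinom (j+1) = Nat.choose (2*j+1+1) (j+1) := by
      rw [Nat.centralBinom_eq_two_mul_choose, show 2*(j+1) = 2*j+1+1 from by omega]
    rw [h7]
    conv_rhs => rw [Nat.choose_succ_succ]
    rw [h6]; ring
  have hB : (0:ℝ) < (Nat.centralBinom (j+1) : ℝ) := by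
    exact_mod_cast Nat.centralBinom_pos (j+1)
  have hcast : (Nat.choose (2*j+1) (j+1) : ℝ) = (Nat.centralBinom (j+1) : ℝ) / 2 := by
    rw [← hch]; push_cast; ring
  have hcb : (Nat.choose (2*(j+1)) (j+1) : ℝ) = (Nat.centralBinom (j+1) : ℝ) := by
    rw [Nat.centralBinom_eq_two_mul_choose]
  have hpow : (2:ℝ)^(2*j+1) = 4^(j+1) / 2 := by
    have h7 : (2:ℝ)^(2*(j+1)) = 4^(j+1) := by rw [pow_mul]; norm_num
    rw [← h7]
    have : 2*(j+1) = (2*j+1)+1 := by omega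
    rw [this, pow_succ]
    ring
  rw [Cd, if_neg (by omega), e1, e2, hcast, hcb, hpow]
  field_simp

lemma Cd_sq (d : ℕ) (hd : 2 ≤ d) : (4/3 : ℝ) * d ≤ (Cd d)^2 := by
  rcases Nat.even_or_odd d with he | ho
  · obtain ⟨m, rfl⟩ : ∃ m, d = 2*m := by obtain ⟨m, hm⟩ := he; exact ⟨m, by omega⟩
    have hm : 1 ≤ m := by omega
    rw [Cd_even m hm]
    have hF : (0:ℝ) ≤ (4:ℝ)^m / (Nat.centralBinom m) := by positivity
    have := f_bound m hm
    push_cast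
    nlinarith [this, hF]
  · obtain ⟨m, rfl⟩ : ∃ m, d = 2*m+1 := by obtain ⟨m, hm⟩ := ho; exact ⟨m, by omega⟩
    have hm : 1 ≤ m := by omega
    rw [Cd_odd m]
    have := f_bound m hm
    push_cast
    linarith

lemma expEpsStar_lt : Real.exp epsStar < 49/16 := by
  have hs1 : Real.sqrt 241 < 15.53 := by
    rw [show (15.53:ℝ) = Real.sqrt (15.53^2) from (Real.sqrt_sq (by norm_num)).symm]
    exact Real.sqrt_lt_sqrt (by norm_num) (by norm_num)
  have hs2 : (15.52:ℝ) < Real.sqrt 241 := by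
    rw [show (15.52:ℝ) = Real.sqrt (15.52^2) from (Real.sqrt_sq (by norm_num)).symm]
    exact Real.sqrt_lt_sqrt (by norm_num) (by norm_num)
  have ha0 : (0:ℝ) ≤ 6353 - 405 * Real.sqrt 241 := by nlinarith
  have hb0 : (0:ℝ) ≤ 6353 + 405 * Real.sqrt 241 := by nlinarith
  have ha : (6353 - 405 * Real.sqrt 241 : ℝ) ^ ((1:ℝ)/3) ≤ 4.1 := by
    calc (6353 - 405 * Real.sqrt 241 : ℝ) ^ ((1:ℝ)/3)
        ≤ (((4.1:ℝ)^(3:ℕ)) : ℝ) ^ ((1:ℝ)/3) :=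
          Real.rpow_le_rpow ha0 (by norm_num; nlinarith) (by norm_num)
      _ = 4.1 := by
          rw [← Real.rpow_natCast (4.1:ℝ) 3, ← Real.rpow_mul (by norm_num)]
          norm_num
  have hb : (6353 + 405 * Real.sqrt 241 : ℝ) ^ ((1:ℝ)/3) ≤ 23.3 := by
    calc (6353 + 405 * Real.sqrt 241 : ℝ) ^ ((1:ℝ)/3)
        ≤ (((23.3:ℝ)^(3:ℕ)) : ℝ) ^ ((1:ℝ)/3) :=
          Real.rpow_le_rpow hb0 (by norm_num; nlinarith) (by norm_num)
      _ = 23.3 := by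
          rw [← Real.rpow_natCast (23.3:ℝ) 3, ← Real.rpow_mul (by norm_num)]
          norm_num
  have hbl : (18:ℝ) ≤ (6353 + 405 * Real.sqrt 241 : ℝ) ^ ((1:ℝ)/3) := by
    calc (18:ℝ) = (((18:ℝ)^(3:ℕ)) : ℝ) ^ ((1:ℝ)/3) := by
          rw [← Real.rpow_natCast (18:ℝ) 3, ← Real.rpow_mul (by norm_num)]
          norm_num
      _ ≤ _ := Real.rpow_le_rpow (by norm_num) (by nlinarith) (by norm_num)
  have hal : (0:ℝ) ≤ (6353 - 405 * Real.sqrt 241 : ℝ) ^ ((1:ℝ)/3) :=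
    Real.rpow_nonneg ha0 _
  have hrpos : (0:ℝ) < (-5 + 2 * (6353 - 405 * Real.sqrt 241) ^ ((1 : ℝ) / 3) +
      2 * (6353 + 405 * Real.sqrt 241) ^ ((1 : ℝ) / 3)) / 27 := by
    apply div_pos _ (by norm_num)
    linarith
  rw [epsStar, Real.exp_log hrpos]
  rw [div_lt_iff₀ (by norm_num : (0:ℝ) < 27)]
  linarith

lemma step_lt (n a g : ℝ) (hn : 0 < n) (h : a + 1 < g) : n*a + n - 1 < n*g - 1 := by nlinarith

set_option maxHeartbeats 2000000 in
/-- For every `d > 1` and `ε > 0`, with `k = max{1, min{d, ⌊ε/2.5⌋}}`, the worst-case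
per-attribute noise variances satisfy `MaxVar_H < MaxVar_P < MaxVar_D`. -/
theorem stmt_19 (d : ℕ) (hd : 1 < d) (ε : ℝ) (hε : 0 < ε)
    (k : ℕ) (hkdef : k = max 1 (min d ⌊ε / 2.5⌋₊))
    (MaxVarD MaxVarP MaxVarH : ℝ)
    (hD : MaxVarD = ((exp ε + 1) / (exp ε - 1)) ^ 2 * Cd d ^ 2)
    (hP : MaxVarP =
      (d : ℝ) * (exp (ε / (2 * k)) + 3) / (3 * k * (exp (ε / (2 * k)) - 1) ^ 2) +
        (d : ℝ) * exp (ε / (2 * k)) / (k * (exp (ε / (2 * k)) - 1)) - 1)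
    (hH : MaxVarH =
      if ε / k > epsStar then
        ((d : ℝ) / k) *
            ((exp (ε / (2 * k)) + 3) / (3 * exp (ε / (2 * k)) * (exp (ε / (2 * k)) - 1)) +
              (exp (ε / k) + 1) ^ 2 / (exp (ε / (2 * k)) * (exp (ε / k) - 1) ^ 2)) +
          (d : ℝ) / k - 1
      else ((d : ℝ) / k) * ((exp (ε / k) + 1) / (exp (ε / k) - 1)) ^ 2 + (d : ℝ) / k - 1) :
    MaxVarH < MaxVarP ∧ MaxVarP < MaxVarD := by
  have hk1 : 1 ≤ k := by rw [hkdef]; exact le_max_left _ _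
  have hkd : k ≤ d := by rw [hkdef]; exact max_le hd.le (min_le_left _ _)
  have hkR : (1:ℝ) ≤ (k:ℝ) := by exact_mod_cast hk1
  have hk0 : (0:ℝ) < (k:ℝ) := by linarith
  have hd0 : (0:ℝ) < (d:ℝ) := by exact_mod_cast Nat.zero_lt_of_lt hd
  set E := exp (ε / (2 * (k:ℝ))) with hEdef
  have hx : 0 < ε / (2 * (k:ℝ)) := by positivity
  have hE : 1 < E := by
    rw [hEdef, show (1:ℝ) = exp 0 from (Real.exp_zero).symm]
    exact Real.exp_lt_exp.2 hx
  have hE0 : (0:ℝ) < E := by linarith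
  have hEm1 : (0:ℝ) < E - 1 := by linarith
  have hne1 : E - 1 ≠ 0 := by linarith
  have hne2 : E + 1 ≠ 0 := by linarith
  have hne3 : E ≠ 0 := by linarith
  have hE2 : exp (ε / (k:ℝ)) = E^2 := by
    rw [hEdef, sq, ← Real.exp_add]
    congr 1
    field_simp
    ring
  have hn : (0:ℝ) < (d:ℝ)/(k:ℝ) := by positivity
  have hPe : MaxVarP = ((d:ℝ)/(k:ℝ)) * ((E+3)/(3*(E-1)^2) + E/(E-1)) - 1 := by
    rw [hP]
    field_simp
  constructor
  · -- MaxVarH < MaxVarP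
    by_cases hc : ε / (k:ℝ) > epsStar
    · rw [hH, if_pos hc, hE2, hPe]
      have h4 : E^2 - 1 ≠ 0 := by nlinarith
      have key : (E+3)/(3*E*(E-1)) + (E^2+1)^2/(E*(E^2-1)^2) + 1
          < (E+3)/(3*(E-1)^2) + E/(E-1) := by
        have heq : ((E+3)/(3*(E-1)^2) + E/(E-1))
            - ((E+3)/(3*E*(E-1)) + (E^2+1)^2/(E*(E^2-1)^2) + 1)
            = (4*E*(E^2-E+1)) / (3*E*(E-1)^2*(E+1)^2) := by
          field_simp
          ring
        have hpos : 0 < (4*E*(E^2-E+1)) / (3*E*(E-1)^2*(E+1)^2) := by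
          apply div_pos (by nlinarith)
          have := pow_pos hEm1 2
          have h5 : (0:ℝ) < (E+1)^2 := by positivity
          nlinarith
        linarith
      exact step_lt _ _ _ hn key
    · rw [hH, if_neg hc, hE2, hPe]
      push_neg at hc
      have hexp : exp (ε / (k:ℝ)) ≤ exp epsStar := Real.exp_le_exp.2 hc
      have hE49 : E^2 < 49/16 := by
        rw [← hE2]
        exact lt_of_le_of_lt hexp expEpsStar_lt
      have hEle : E ≤ 7/4 := by nlinarith
      have h4 : E^2 - 1 ≠ 0 := by nlinarith
      have key : ((E^2+1)/(E^2-1))^2 + 1 < (E+3)/(3*(E-1)^2) + E/(E-1) := by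
        have heq : ((E+3)/(3*(E-1)^2) + E/(E-1)) - (((E^2+1)/(E^2-1))^2 + 1)
            = (-(3*E^4-4*E^3-2*E^2-4*E+3)) / (3*(E-1)^2*(E+1)^2) := by
          field_simp
          ring
        have hq : 3*E^4-4*E^3-2*E^2-4*E+3 < 0 := by
          nlinarith [mul_nonneg (sub_nonneg.2 hEle) (pow_nonneg hE0.le 3),
            mul_nonneg (sub_nonneg.2 hEle) (sq_nonneg E),
            mul_nonneg (sub_nonneg.2 hEle) hE0.le, hE]
        have hpos : 0 < (-(3*E^4-4*E^3-2*E^2-4*E+3)) / (3*(E-1)^2*(E+1)^2) := by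
          apply div_pos (by linarith)
          have := pow_pos hEm1 2
          have h5 : (0:ℝ) < (E+1)^2 := by positivity
          nlinarith
        linarith
      exact step_lt _ _ _ hn key
  · -- MaxVarP < MaxVarD
    have hC := Cd_sq d hd
    have hy : 1 < exp ε := by
      rw [show (1:ℝ) = exp 0 from (Real.exp_zero).symm]
      exact Real.exp_lt_exp.2 hε
    have hA : 1 < (exp ε + 1)/(exp ε - 1) := by
      rw [lt_div_iff₀ (by linarith)]
      linarith
    rw [hD, hPe]
    by_cases hk : k = 1
    · have hkR1 : (k:ℝ) = 1 := by rw [hk]; norm_num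
      have hnd : (d:ℝ)/(k:ℝ) = (d:ℝ) := by rw [hkR1]; ring
      have hEε : exp ε = E^2 := by
        rw [← hE2]
        congr 1
        rw [hkR1]
        ring
      have h4 : E^2 - 1 ≠ 0 := by nlinarith
      have key3 : (E+3)/(3*(E-1)^2) + E/(E-1) < (4/3)*((E^2+1)/(E^2-1))^2 := by
        have heq : (4/3)*((E^2+1)/(E^2-1))^2 - ((E+3)/(3*(E-1)^2) + E/(E-1))
            = (E-1)^2/(3*(E+1)^2) := by
          field_simp
          ring
        have hpos : 0 < (E-1)^2/(3*(E+1)^2) := by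
          apply div_pos (pow_pos hEm1 2)
          have h5 : (0:ℝ) < (E+1)^2 := by positivity
          nlinarith
        linarith
      rw [hEε, hnd]
      have h1 : (d:ℝ) * ((E+3)/(3*(E-1)^2) + E/(E-1))
          < (d:ℝ) * ((4/3)*((E^2+1)/(E^2-1))^2) := by
        exact mul_lt_mul_of_pos_left key3 hd0
      have h2 : ((E^2+1)/(E^2-1))^2 * ((4/3)*(d:ℝ)) ≤ ((E^2+1)/(E^2-1))^2 * Cd d^2 :=
        mul_le_mul_of_nonneg_left hC (sq_nonneg _)
      have h3 : (d:ℝ) * ((4/3)*((E^2+1)/(E^2-1))^2)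
          = ((E^2+1)/(E^2-1))^2 * ((4/3)*(d:ℝ)) := by ring
      linarith
    · have hk2 : 2 ≤ k := by omega
      have hfl : k ≤ ⌊ε/2.5⌋₊ := by omega
      have hfl' : ((k:ℝ)) ≤ ε/2.5 :=
        le_trans (by exact_mod_cast Nat.cast_le.2 hfl) (Nat.floor_le (by positivity))
      have hk2R : (2:ℝ) ≤ (k:ℝ) := by exact_mod_cast hk2
      have h25 : ε / 2.5 = 2 * ε / 5 := by rw [show (2.5:ℝ) = 5/2 from by norm_num]; ring
      rw [h25] at hfl'
      have hx125 : (1.25:ℝ) ≤ ε/(2*(k:ℝ)) := by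
        rw [show (1.25:ℝ) = 5/4 from by norm_num, le_div_iff₀ (by positivity)]
        nlinarith
      have hE3 : (3:ℝ) ≤ E := by
        have e1 : exp (1.25:ℝ) = exp 1 * exp 0.25 := by
          rw [← Real.exp_add]; norm_num
        have e2 : (1.25:ℝ) ≤ exp 0.25 := by nlinarith [Real.add_one_le_exp (0.25:ℝ)]
        have e3 : (2.7182818283:ℝ) < exp 1 := Real.exp_one_gt_d9
        have e4 : (3:ℝ) ≤ exp 1.25 := by nlinarith [Real.exp_pos (1:ℝ)]
        calc (3:ℝ) ≤ exp 1.25 := e4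
          _ ≤ E := by rw [hEdef]; exact Real.exp_le_exp.2 hx125
      have hgle : (E+3)/(3*(E-1)^2) + E/(E-1) ≤ 2 := by
        have heq : 2 - ((E+3)/(3*(E-1)^2) + E/(E-1)) = ((3*E-1)*(E-3))/(3*(E-1)^2) := by
          field_simp
          ring
        have hnum : (0:ℝ) ≤ (3*E-1)*(E-3) := by nlinarith
        have hden : (0:ℝ) ≤ 3*(E-1)^2 := by positivity
        have := div_nonneg hnum hden
        linarith
      have hgpos : (0:ℝ) ≤ (E+3)/(3*(E-1)^2) + E/(E-1) := by
        have t1 : (0:ℝ) ≤ (E+3)/(3*(E-1)^2) := div_nonneg (by linarith) (by positivity)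
        have t2 : (0:ℝ) ≤ E/(E-1) := div_nonneg (by linarith) (by linarith)
        linarith
      have hnle : (d:ℝ)/(k:ℝ) ≤ (d:ℝ)/2 := by
        rw [div_le_div_iff₀ hk0 (by norm_num)]
        nlinarith
      have hP2 : ((d:ℝ)/(k:ℝ)) * ((E+3)/(3*(E-1)^2) + E/(E-1)) ≤ (d:ℝ)/2 * 2 :=
        mul_le_mul hnle hgle hgpos (by positivity)
      have hCpos : (0:ℝ) < Cd d^2 := by nlinarith
      have hA2 : 1 < ((exp ε+1)/(exp ε-1))^2 := by nlinarith
      have hmul : Cd d^2 < ((exp ε+1)/(exp ε-1))^2 * Cd d^2 := by nlinarith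
      have hd2 : (2:ℝ) ≤ (d:ℝ) := by exact_mod_cast hd
      nlinarith
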